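/- Let (M,g) be an n-dimensional Einstein pseudo-Riemannian manifold whose metric is conformally flat, with P_{ab} = (J/n)g_{ab} and J ≠ 0 constant. Let k be a conformal Killing 1-form with ∇_{(a}k_{b)} = -ρ g_{ab}, ρ = -(1/n)∇_a k^a. Then the Hessian of ρ satisfies ∇_a∇_b ρ = -(2J/n)ρ g_{ab}, and consequently the vector field k̄_b = k_b + (1/(2J))∇_b ∇_a k^a is a Killing vector field for g. -/

import Mathlib

noncomputable section
open scoped BigOperators

/-- Partial derivative `∂ᵢ f` of a real-valued function on the chart `Fin n → ℝ`. -/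
def pd {n : ℕ} (i : Fin n) (f : (Fin n → ℝ) → ℝ) (x : Fin n → ℝ) : ℝ :=
  fderiv ℝ f x (fun j => if j = i then (1 : ℝ) else 0)

/-- A pseudo-Riemannian metric on the global chart `Fin n → ℝ`. -/
structure PseudoMetricChart (n : ℕ) where
  g : (Fin n → ℝ) → Fin n → Fin n → ℝ
  ginv : (Fin n → ℝ) → Fin n → Fin n → ℝ
  symm : ∀ x a b, g x a b = g x b a
  invl : ∀ x a b, (∑ c, ginv x a c * g x c b) = if a = b then (1 : ℝ) else 0
  smooth_g : ∀ a b, ContDiff ℝ (⊤ : ℕ∞) fun x => g x a b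
  smooth_ginv : ∀ a b, ContDiff ℝ (⊤ : ℕ∞) fun x => ginv x a b

namespace PseudoMetricChart

variable {n : ℕ} (M : PseudoMetricChart n)

/-- Christoffel symbols `Γ^a_{bc}` of the Levi-Civita connection. -/
def Γ (x : Fin n → ℝ) (a b c : Fin n) : ℝ :=
  (1 / 2) * ∑ d, M.ginv x a d *
    (pd b (fun y => M.g y d c) x + pd c (fun y => M.g y d b) x - pd d (fun y => M.g y b c) x)

/-- Covariant derivative `∇_a k_b` of a 1-form. -/
def covD1 (k : (Fin n → ℝ) → Fin n → ℝ) (x : Fin n → ℝ) (a b : Fin n) : ℝ :=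
  pd a (fun y => k y b) x - ∑ c, M.Γ x c a b * k x c

/-- Covariant derivative `∇_a v^b` of a vector field. -/
def covDvec (v : (Fin n → ℝ) → Fin n → ℝ) (x : Fin n → ℝ) (a b : Fin n) : ℝ :=
  pd a (fun y => v y b) x + ∑ c, M.Γ x b a c * v x c

/-- Covariant derivative `∇_a k_{bc}` of a covariant 2-tensor. -/
def covD2 (k : (Fin n → ℝ) → Fin n → Fin n → ℝ) (x : Fin n → ℝ) (a b c : Fin n) : ℝ :=
  pd a (fun y => k y b c) x - (∑ d, M.Γ x d a b * k x d c) - ∑ d, M.Γ x d a c * k x b d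

/-- Divergence `∇_a v^a` of a vector field. -/
def divVec (v : (Fin n → ℝ) → Fin n → ℝ) (x : Fin n → ℝ) : ℝ :=
  ∑ a, M.covDvec v x a a

/-- Laplacian `Δf = g^{ac} ∇_a ∇_c f` of a function. -/
def lap0 (f : (Fin n → ℝ) → ℝ) (x : Fin n → ℝ) : ℝ :=
  ∑ a, ∑ c, M.ginv x a c * M.covD1 (fun y b => pd b f y) x a c

/-- Laplacian `Δk_b = g^{ac} ∇_a ∇_c k_b` of a 1-form. -/
def lap1 (k : (Fin n → ℝ) → Fin n → ℝ) (x : Fin n → ℝ) (b : Fin n) : ℝ :=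
  ∑ a, ∑ c, M.ginv x a c * M.covD2 (fun y p q => M.covD1 k y p q) x a c b

/-- Riemann curvature `R_{ab}{}^c{}_d`, with the convention
`R_{ab}{}^c{}_d X^d = ∇_a ∇_b X^c - ∇_b ∇_a X^c`. -/
def Riem (x : Fin n → ℝ) (a b c d : Fin n) : ℝ :=
  pd a (fun y => M.Γ y c b d) x - pd b (fun y => M.Γ y c a d) x
    + (∑ e, M.Γ x c a e * M.Γ x e b d) - ∑ e, M.Γ x c b e * M.Γ x e a d

/-- Ricci curvature `R_{bd} = R_{ab}{}^a{}_d`. -/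
def Ricci (x : Fin n → ℝ) (b d : Fin n) : ℝ := ∑ a, M.Riem x a b a d

/-- Scalar curvature. -/
def scal (x : Fin n → ℝ) : ℝ := ∑ b, ∑ d, M.ginv x b d * M.Ricci x b d

/-- Trace of the Schouten tensor, `J = Scal/(2(n-1))`. -/
def Jsc (x : Fin n → ℝ) : ℝ := (1 / (2 * ((n : ℝ) - 1))) * M.scal x

/-- Schouten tensor, `P_{ab} = (Ric_{ab} - J g_{ab})/(n-2)`. -/
def Schouten (x : Fin n → ℝ) (a b : Fin n) : ℝ :=
  (1 / ((n : ℝ) - 2)) * (M.Ricci x a b - M.Jsc x * M.g x a b)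

end PseudoMetricChart

/-!
A conformally flat Einstein metric with `P = (J/n) g` has constant curvature `κ = 2J/n`.
There the conformal Killing equation prolongs: its derivative gives the symmetric part of
`∇_c ∇_a k_b` and the Ricci identity the antisymmetric part, so `∇∇k` is an explicit
expression in `k`, `dρ` and `g`. Differentiating once more and commuting the derivatives
with the Ricci identity for 2-tensors shows that the Kulkarni–Nomizu product
`(∇∇ρ + κρ g) ⊙ g` vanishes, which for `n ≥ 3` forces `∇∇ρ = -κρ g`. Since
`∇_a k^a = -nρ`, the corrected field is `k - κ⁻¹ dρ`, whose symmetrized derivative is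
`-2ρ g + 2ρ g = 0`.
-/

open scoped ContDiff

section ChartCalculus

variable {n : ℕ} {f h : (Fin n → ℝ) → ℝ} {x : Fin n → ℝ}

@[fun_prop]
theorem ContDiff.differentiableAt_of_infty (hf : ContDiff ℝ ∞ f) : DifferentiableAt ℝ f x :=
  hf.differentiable (by simp) x

@[fun_prop]
theorem contDiff_pd (hf : ContDiff ℝ ∞ f) (i : Fin n) : ContDiff ℝ ∞ fun x => pd i f x :=
  (hf.fderiv_right (by simp)).clm_apply contDiff_const

theorem pd_add (hf : DifferentiableAt ℝ f x) (hh : DifferentiableAt ℝ h x) (i : Fin n) :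
    pd i (fun y => f y + h y) x = pd i f x + pd i h x := by
  simp [pd, fderiv_fun_add hf hh]

theorem pd_sub (hf : DifferentiableAt ℝ f x) (hh : DifferentiableAt ℝ h x) (i : Fin n) :
    pd i (fun y => f y - h y) x = pd i f x - pd i h x := by
  simp [pd, fderiv_fun_sub hf hh]

theorem pd_mul (hf : DifferentiableAt ℝ f x) (hh : DifferentiableAt ℝ h x) (i : Fin n) :
    pd i (fun y => f y * h y) x = pd i f x * h x + f x * pd i h x := by
  simp [pd, fderiv_fun_mul hf hh]
  ring

theorem pd_const_mul (c : ℝ) (i : Fin n) : pd i (fun y => c * f y) x = c * pd i f x := by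
  change fderiv ℝ (c • f) x _ = _
  rw [fderiv_const_smul_field]
  rfl

theorem pd_sum {ι : Type*} {s : Finset ι} {F : ι → (Fin n → ℝ) → ℝ}
    (hF : ∀ j ∈ s, DifferentiableAt ℝ (F j) x) (i : Fin n) :
    pd i (fun y => ∑ j ∈ s, F j y) x = ∑ j ∈ s, pd i (F j) x := by
  simp [pd, fderiv_fun_sum hF]

theorem pd_comm (hf : ContDiff ℝ ∞ f) (i j : Fin n) (x : Fin n → ℝ) :
    pd i (pd j f) x = pd j (pd i f) x := by
  have hsymm := hf.contDiffAt.isSymmSndFDerivAt (x := x) (by simp; norm_cast)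
  have hdf := (hf.fderiv_right (m := ∞) (by simp)).differentiable (by simp) x
  have hpd : ∀ i j, pd i (pd j f) x = fderiv ℝ (fderiv ℝ f) x
      (fun k => if k = i then 1 else 0) (fun k => if k = j then 1 else 0) := by
    intro i j
    change fderiv ℝ (fun y => fderiv ℝ f y _) x _ = _
    rw [fderiv_clm_apply hdf (differentiableAt_const _)]
    simp
  rw [hpd, hpd, hsymm]

end ChartCalculus

theorem sum_mul_sum_swap {n : ℕ} (A v : Fin n → ℝ) (B : Fin n → Fin n → ℝ) :
    ∑ d, A d * ∑ e, B e d * v e = ∑ d, (∑ e, B d e * A e) * v d := by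
  simp only [Finset.mul_sum, Finset.sum_mul]
  rw [Finset.sum_comm]
  exact Finset.sum_congr rfl fun _ _ => Finset.sum_congr rfl fun _ _ => by ring

theorem sum_mul_sum_mul_comm {n : ℕ} (A B : Fin n → ℝ) (T : Fin n → Fin n → ℝ) :
    ∑ e, A e * ∑ f, B f * T e f = ∑ e, B e * ∑ f, A f * T f e := by
  simp only [Finset.mul_sum]
  rw [Finset.sum_comm]
  exact Finset.sum_congr rfl fun _ _ => Finset.sum_congr rfl fun _ _ => by ring

namespace PseudoMetricChart

variable {n : ℕ} (M : PseudoMetricChart n)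

@[fun_prop]
theorem contDiff_g (a b : Fin n) : ContDiff ℝ ∞ fun x => M.g x a b := M.smooth_g a b

@[fun_prop]
theorem contDiff_ginv (a b : Fin n) : ContDiff ℝ ∞ fun x => M.ginv x a b := M.smooth_ginv a b

@[fun_prop]
theorem contDiff_Γ (a b c : Fin n) : ContDiff ℝ ∞ fun x => M.Γ x a b c := by
  unfold Γ; fun_prop

theorem sum_g_mul_ginv (x : Fin n → ℝ) (a b : Fin n) :
    ∑ c, M.g x a c * M.ginv x c b = if a = b then 1 else 0 := by
  have h : Matrix.of (M.ginv x) * Matrix.of (M.g x) = 1 := by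
    ext a b
    simpa [Matrix.mul_apply, Matrix.one_apply] using M.invl x a b
  simpa [Matrix.mul_apply, Matrix.one_apply] using congrArg (· a b) (mul_eq_one_comm.mp h)

theorem Γ_symm (x : Fin n → ℝ) (a b c : Fin n) : M.Γ x a b c = M.Γ x a c b := by
  simp only [Γ, M.symm _ b c, add_comm]

theorem sum_Γ_mul_g (x : Fin n → ℝ) (a b c : Fin n) :
    ∑ d, M.Γ x d a b * M.g x d c = (1 / 2) * (pd a (fun y => M.g y c b) x
      + pd b (fun y => M.g y c a) x - pd c (fun y => M.g y a b) x) := by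
  calc ∑ d, M.Γ x d a b * M.g x d c
      = ∑ e, (∑ d, M.g x c d * M.ginv x d e) * ((1 / 2) * (pd a (fun y => M.g y e b) x
          + pd b (fun y => M.g y e a) x - pd e (fun y => M.g y a b) x)) := by
        simp only [Γ, Finset.mul_sum, Finset.sum_mul]
        rw [Finset.sum_comm]
        refine Finset.sum_congr rfl fun e _ => Finset.sum_congr rfl fun d _ => ?_
        rw [M.symm x d c]
        ring
    _ = _ := by simp [sum_g_mul_ginv]

theorem covD2_g (x : Fin n → ℝ) (a b c : Fin n) : M.covD2 M.g x a b c = 0 := by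
  have h₁ := M.sum_Γ_mul_g x a b c
  have h₂ := M.sum_Γ_mul_g x a c b
  simp only [covD2, M.symm x b, h₁, h₂, M.symm _ c b, M.symm _ c a, M.symm _ b a]
  ring

theorem sum_ginv_mul_sum_g_mul (x : Fin n → ℝ) (v : Fin n → ℝ) (e : Fin n) :
    ∑ c, M.ginv x e c * ∑ f, M.g x c f * v f = v e := by
  simp only [Finset.mul_sum, ← mul_assoc]
  rw [Finset.sum_comm]
  simp [← Finset.sum_mul, M.invl]

def tr (x : Fin n → ℝ) (T : Fin n → Fin n → ℝ) : ℝ := ∑ a, ∑ b, M.ginv x a b * T a b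

section Trace

variable (x : Fin n → ℝ) (A B : Fin n → Fin n → ℝ)

theorem tr_zero : M.tr x (fun _ _ => 0) = 0 := by
  simp [tr]

theorem tr_add : M.tr x (fun a b => A a b + B a b) = M.tr x A + M.tr x B := by
  simp only [tr, mul_add, Finset.sum_add_distrib]

theorem tr_sub : M.tr x (fun a b => A a b - B a b) = M.tr x A - M.tr x B := by
  simp only [tr, mul_sub, Finset.sum_sub_distrib]

theorem tr_const_mul (s : ℝ) : M.tr x (fun a b => s * A a b) = s * M.tr x A := by
  simp only [tr, Finset.mul_sum]
  exact Finset.sum_congr rfl fun _ _ => Finset.sum_congr rfl fun _ _ => by ring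

theorem tr_mul_const (s : ℝ) : M.tr x (fun a b => A a b * s) = M.tr x A * s := by
  simpa only [mul_comm _ s] using M.tr_const_mul x A s

theorem tr_g : M.tr x (M.g x) = n := by
  calc M.tr x (M.g x) = ∑ a, ∑ b, M.ginv x a b * M.g x b a :=
        Finset.sum_congr rfl fun a _ => Finset.sum_congr rfl fun b _ => by rw [M.symm]
    _ = n := by simp [M.invl]

theorem tr_mul_g_left (F : Fin n → ℝ) (c : Fin n) :
    M.tr x (fun a b => F a * M.g x b c) = F c := by
  simp only [tr, ← mul_assoc, mul_comm (M.ginv x _ _) (F _)]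
  simp [mul_assoc, ← Finset.mul_sum, M.invl]

theorem tr_mul_g_right (F : Fin n → ℝ) (c : Fin n) :
    M.tr x (fun a b => F b * M.g x a c) = F c := by
  simp only [tr]
  rw [Finset.sum_comm]
  simp only [mul_left_comm _ (F _), ← Finset.mul_sum, M.symm x _ c, mul_comm (M.ginv x _ _),
    sum_g_mul_ginv]
  simp

end Trace

-- `h` is the vanishing of the Kulkarni–Nomizu product `(T ⊙ g)_{dcab}`.
theorem eq_zero_of_kulkarniNomizu_g_eq_zero (hn : 3 ≤ n) (x : Fin n → ℝ)
    {T : Fin n → Fin n → ℝ} (h : ∀ a b c d,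
      T d a * M.g x c b + T c b * M.g x d a - T d b * M.g x c a - T c a * M.g x b d = 0)
    (a b : Fin n) : T a b = 0 := by
  have hn' : (3 : ℝ) ≤ n := by exact_mod_cast hn
  have htr : ∀ d a, ((n : ℝ) - 2) * T d a + M.tr x T * M.g x d a = 0 := by
    intro d a
    have := congrArg (M.tr x) (funext₂ fun c b => h a b c d)
    simp only [tr_sub, tr_add, tr_const_mul, tr_mul_const, tr_g, tr_mul_g_left,
      tr_mul_g_right, tr_zero] at this
    linear_combination this
  have htr0 : M.tr x T = 0 := by
    have := congrArg (M.tr x) (funext₂ htr)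
    simp only [tr_add, tr_const_mul, tr_g, tr_zero] at this
    have : (2 * (n : ℝ) - 2) * M.tr x T = 0 := by linear_combination this
    exact (mul_eq_zero.1 this).resolve_left (by linarith)
  have := htr a b
  rw [htr0, zero_mul, add_zero] at this
  exact (mul_eq_zero.1 this).resolve_left (by linarith)

def covD3 (T : (Fin n → ℝ) → Fin n → Fin n → Fin n → ℝ) (x : Fin n → ℝ)
    (a b c d : Fin n) : ℝ :=
  pd a (fun y => T y b c d) x - (∑ e, M.Γ x e a b * T x e c d)
    - (∑ e, M.Γ x e a c * T x b e d) - ∑ e, M.Γ x e a d * T x b c e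

section CovariantCalculus

variable {x : Fin n → ℝ}

@[fun_prop]
theorem contDiff_covD1 {k : (Fin n → ℝ) → Fin n → ℝ}
    (hk : ∀ b, ContDiff ℝ ∞ fun x => k x b) (a b : Fin n) :
    ContDiff ℝ ∞ fun x => M.covD1 k x a b := by
  unfold covD1; fun_prop

theorem covD1_sub {f h : (Fin n → ℝ) → Fin n → ℝ}
    (hf : ∀ b, DifferentiableAt ℝ (f · b) x) (hh : ∀ b, DifferentiableAt ℝ (h · b) x)
    (a b : Fin n) :
    M.covD1 (fun y c => f y c - h y c) x a b = M.covD1 f x a b - M.covD1 h x a b := by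
  simp only [covD1, pd_sub (hf b) (hh b), mul_sub, Finset.sum_sub_distrib]
  ring

theorem covD1_const_mul (s : ℝ) (f : (Fin n → ℝ) → Fin n → ℝ) (a b : Fin n) :
    M.covD1 (fun y c => s * f y c) x a b = s * M.covD1 f x a b := by
  simp only [covD1, pd_const_mul, mul_sub, Finset.mul_sum, mul_left_comm s]

theorem covD2_add {S T : (Fin n → ℝ) → Fin n → Fin n → ℝ}
    (hS : ∀ a b, DifferentiableAt ℝ (S · a b) x)
    (hT : ∀ a b, DifferentiableAt ℝ (T · a b) x) (c a b : Fin n) :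
    M.covD2 (fun y p q => S y p q + T y p q) x c a b = M.covD2 S x c a b + M.covD2 T x c a b := by
  simp only [covD2, pd_add (hS a b) (hT a b), mul_add, Finset.sum_add_distrib]
  ring

theorem covD2_transpose (T : (Fin n → ℝ) → Fin n → Fin n → ℝ) (c a b : Fin n) :
    M.covD2 (fun y p q => T y q p) x c a b = M.covD2 T x c b a := by
  unfold covD2
  ring

theorem covD2_mul_g {f : (Fin n → ℝ) → ℝ} (hf : DifferentiableAt ℝ f x) (c a b : Fin n) :
    M.covD2 (fun y p q => f y * M.g y p q) x c a b = pd c f x * M.g x a b := by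
  have hg := M.covD2_g x c a b
  simp only [covD2, pd_mul hf (by fun_prop : DifferentiableAt ℝ (M.g · a b) x)] at hg ⊢
  simp only [mul_left_comm _ (f x), ← Finset.mul_sum]
  linear_combination f x * hg

theorem covD3_sub {S T : (Fin n → ℝ) → Fin n → Fin n → Fin n → ℝ}
    (hS : ∀ b c d, DifferentiableAt ℝ (S · b c d) x)
    (hT : ∀ b c d, DifferentiableAt ℝ (T · b c d) x) (a b c d : Fin n) :
    M.covD3 (fun y p q r => S y p q r - T y p q r) x a b c d
      = M.covD3 S x a b c d - M.covD3 T x a b c d := by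
  simp only [covD3, pd_sub (hS b c d) (hT b c d), mul_sub, Finset.sum_sub_distrib]
  ring

theorem covD3_rotate (T : (Fin n → ℝ) → Fin n → Fin n → Fin n → ℝ) (a b c d : Fin n) :
    M.covD3 (fun y p q r => T y q r p) x a b c d = M.covD3 T x a c d b := by
  unfold covD3
  ring

theorem covD3_mul_g {θ : (Fin n → ℝ) → Fin n → ℝ}
    (hθ : ∀ b, DifferentiableAt ℝ (θ · b) x) (d c a b : Fin n) :
    M.covD3 (fun y p q r => θ y p * M.g y q r) x d c a b = M.covD1 θ x d c * M.g x a b := by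
  have hg := M.covD2_g x d a b
  simp only [covD2, covD3, covD1,
    pd_mul (hθ c) (by fun_prop : DifferentiableAt ℝ (M.g · a b) x)] at hg ⊢
  simp only [← mul_assoc, ← Finset.sum_mul]
  simp only [mul_comm _ (θ x c), mul_assoc, ← Finset.mul_sum]
  linear_combination θ x c * hg

theorem covD1_grad_symm {f : (Fin n → ℝ) → ℝ} (hf : ContDiff ℝ ∞ f) (x : Fin n → ℝ)
    (a b : Fin n) :
    M.covD1 (fun y c => pd c f y) x a b = M.covD1 (fun y c => pd c f y) x b a := by
  simp only [covD1, pd_comm hf a b, M.Γ_symm x _ a b]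

end CovariantCalculus

theorem covD2_covD1_sub_swap {k : (Fin n → ℝ) → Fin n → ℝ}
    (hk : ∀ b, ContDiff ℝ ∞ (k · b)) (x : Fin n → ℝ) (a b c : Fin n) :
    M.covD2 (M.covD1 k) x a b c - M.covD2 (M.covD1 k) x b a c
      = -∑ d, M.Riem x a b d c * k x d := by
  have hpd : ∀ p q, pd p (fun y => M.covD1 k y q c) x = pd p (pd q (k · c)) x
      - ∑ d, (pd p (fun y => M.Γ y d q c) x * k x d + M.Γ x d q c * pd p (k · d) x) := by
    intro p q
    simp only [covD1]
    rw [pd_sub (by fun_prop) (by fun_prop), pd_sum (fun d _ => by fun_prop)]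
    exact congrArg _ (Finset.sum_congr rfl fun d _ => pd_mul (by fun_prop) (by fun_prop) p)
  have hcomm := pd_comm (hk c) a b x
  simp only [covD2, hpd]
  simp only [covD1, Riem, M.Γ_symm x _ b a, mul_sub, sub_mul, add_mul, Finset.sum_sub_distrib,
    Finset.sum_add_distrib, sum_mul_sum_swap]
  linear_combination hcomm

theorem covD3_covD2_sub_swap {T : (Fin n → ℝ) → Fin n → Fin n → ℝ}
    (hT : ∀ c d, ContDiff ℝ ∞ (T · c d)) (x : Fin n → ℝ) (a b c d : Fin n) :
    M.covD3 (M.covD2 T) x a b c d - M.covD3 (M.covD2 T) x b a c d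
      = -(∑ e, M.Riem x a b e c * T x e d) - ∑ e, M.Riem x a b e d * T x c e := by
  have hpd : ∀ p q, pd p (fun y => M.covD2 T y q c d) x = pd p (pd q (T · c d)) x
      - (∑ e, (pd p (fun y => M.Γ y e q c) x * T x e d + M.Γ x e q c * pd p (T · e d) x))
      - ∑ e, (pd p (fun y => M.Γ y e q d) x * T x c e + M.Γ x e q d * pd p (T · c e) x) := by
    intro p q
    simp only [covD2]
    rw [pd_sub (by fun_prop) (by fun_prop), pd_sub (by fun_prop) (by fun_prop),
      pd_sum (fun e _ => by fun_prop), pd_sum (fun e _ => by fun_prop)]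
    refine congrArg₂ _ (congrArg₂ _ rfl ?_) ?_ <;>
      exact Finset.sum_congr rfl fun e _ => pd_mul (by fun_prop) (by fun_prop) p
  have hcomm := pd_comm (hT c d) a b x
  have hmixed₁ := sum_mul_sum_mul_comm (M.Γ x · a c) (M.Γ x · b d) (T x)
  have hmixed₂ := sum_mul_sum_mul_comm (M.Γ x · b c) (M.Γ x · a d) (T x)
  simp only [covD3, hpd]
  simp only [covD2, Riem, M.Γ_symm x _ b a, mul_sub, sub_mul, add_mul, Finset.sum_sub_distrib,
    Finset.sum_add_distrib, sum_mul_sum_swap]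
  linear_combination hcomm + hmixed₁ - hmixed₂

def HasConstCurvature (κ : ℝ) : Prop :=
  ∀ x a b c d, M.Riem x a b c d
    = κ * ((if c = a then 1 else 0) * M.g x b d - (if c = b then 1 else 0) * M.g x a d)

theorem hasConstCurvature_of_schouten_eq {s : ℝ}
    (hP : ∀ x a b, M.Schouten x a b = s * M.g x a b)
    (hW : ∀ x a b c d, (∑ e, M.g x c e * M.Riem x a b e d)
      = M.g x c a * M.Schouten x b d - M.g x c b * M.Schouten x a d
        + M.g x d b * M.Schouten x a c - M.g x d a * M.Schouten x b c) :
    M.HasConstCurvature (2 * s) := by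
  intro x a b e d
  have hlow : ∀ c, ∑ f, M.g x c f * M.Riem x a b f d
      = 2 * s * (M.g x c a * M.g x b d - M.g x c b * M.g x a d) := by
    intro c
    rw [hW, hP, hP, hP, hP, M.symm x d b, M.symm x d a, M.symm x a c, M.symm x b c]
    ring
  rw [← M.sum_ginv_mul_sum_g_mul x (M.Riem x a b · d) e]
  calc ∑ c, M.ginv x e c * ∑ f, M.g x c f * M.Riem x a b f d
      = ∑ c, (2 * s * M.g x b d * (M.ginv x e c * M.g x c a)
          - 2 * s * M.g x a d * (M.ginv x e c * M.g x c b)) :=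
        Finset.sum_congr rfl fun c _ => by rw [hlow]; ring
    _ = _ := by
        simp only [Finset.sum_sub_distrib, ← Finset.mul_sum, M.invl]
        split_ifs <;> ring

theorem HasConstCurvature.sum_riem_mul {κ : ℝ} (h : M.HasConstCurvature κ) (x : Fin n → ℝ)
    (v : Fin n → ℝ) (a b d : Fin n) :
    ∑ e, M.Riem x a b e d * v e = κ * (v a * M.g x b d - v b * M.g x a d) := by
  simp [h x, mul_sub, sub_mul, Finset.sum_sub_distrib, mul_assoc]
  ring

def IsConformalKilling (k : (Fin n → ℝ) → Fin n → ℝ) (ρ : (Fin n → ℝ) → ℝ) :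
    Prop :=
  ∀ x a b, (1 / 2) * (M.covD1 k x a b + M.covD1 k x b a) = -(ρ x) * M.g x a b

def IsKilling (k : (Fin n → ℝ) → Fin n → ℝ) : Prop :=
  ∀ x a b, M.covD1 k x a b + M.covD1 k x b a = 0

namespace IsConformalKilling

variable {M} {k : (Fin n → ℝ) → Fin n → ℝ} {ρ : (Fin n → ℝ) → ℝ} {κ : ℝ}

theorem covD1_add_covD1_swap (hck : M.IsConformalKilling k ρ) (x : Fin n → ℝ) (a b : Fin n) :
    M.covD1 k x a b + M.covD1 k x b a = -2 * ρ x * M.g x a b := by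
  linear_combination 2 * hck x a b

theorem contDiff (hck : M.IsConformalKilling k ρ) (hn : n ≠ 0)
    (hk : ∀ b, ContDiff ℝ ∞ (k · b)) : ContDiff ℝ ∞ ρ := by
  have hρ : ∀ x,
      ρ x = -(1 / (2 * n)) * M.tr x (fun a b => M.covD1 k x a b + M.covD1 k x b a) := by
    intro x
    rw [funext₂ (hck.covD1_add_covD1_swap x), tr_const_mul, tr_g]
    field_simp
  rw [funext hρ]
  unfold tr
  fun_prop

theorem covD2_add_covD2_swap (hck : M.IsConformalKilling k ρ)
    (hk : ∀ b, ContDiff ℝ ∞ (k · b)) (hρ : ContDiff ℝ ∞ ρ) (x : Fin n → ℝ)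
    (c a b : Fin n) :
    M.covD2 (M.covD1 k) x c a b + M.covD2 (M.covD1 k) x c b a = -2 * pd c ρ x * M.g x a b := by
  have h := congrArg (M.covD2 · x c a b) (funext fun y => funext₂ (hck.covD1_add_covD1_swap y))
  rw [M.covD2_add (fun _ _ => by fun_prop) (fun _ _ => by fun_prop),
    M.covD2_transpose (M.covD1 k), M.covD2_mul_g (by fun_prop), pd_const_mul] at h
  linear_combination h

theorem covD2_covD1_eq (hck : M.IsConformalKilling k ρ) (hκ : M.HasConstCurvature κ)
    (hk : ∀ b, ContDiff ℝ ∞ (k · b)) (hρ : ContDiff ℝ ∞ ρ) (x : Fin n → ℝ)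
    (c a b : Fin n) :
    M.covD2 (M.covD1 k) x c a b = (κ * k x a - pd a ρ x) * M.g x b c
      - (κ * k x b - pd b ρ x) * M.g x c a - pd c ρ x * M.g x a b := by
  have hsymm := hck.covD2_add_covD2_swap hk hρ x
  have hanti : ∀ p q r, M.covD2 (M.covD1 k) x p q r - M.covD2 (M.covD1 k) x q p r
      = -(κ * (k x p * M.g x q r - k x q * M.g x p r)) := fun p q r => by
    rw [M.covD2_covD1_sub_swap hk, hκ.sum_riem_mul]
  -- solve for `∇_c ∇_a k_b` from its parts symmetric in `(a, b)` and antisymmetric in `(c, a)`;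
  -- the `M.symm` terms only reorient `g`
  linear_combination (1 / 2) * (hsymm c a b + hanti c a b + hsymm a c b - hanti a b c
    - hsymm b a c + hanti b c a) - κ * k x c / 2 * M.symm x a b
    + (κ * k x a / 2 - pd a ρ x) * M.symm x c b + (κ * k x b / 2 - pd b ρ x) * M.symm x c a

theorem covD3_covD2_covD1_eq (hck : M.IsConformalKilling k ρ) (hκ : M.HasConstCurvature κ)
    (hk : ∀ b, ContDiff ℝ ∞ (k · b)) (hρ : ContDiff ℝ ∞ ρ) (x : Fin n → ℝ)
    (d c a b : Fin n) :
    M.covD3 (M.covD2 (M.covD1 k)) x d c a b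
      = (κ * M.covD1 k x d a - M.covD1 (fun y q => pd q ρ y) x d a) * M.g x b c
        - (κ * M.covD1 k x d b - M.covD1 (fun y q => pd q ρ y) x d b) * M.g x c a
        - M.covD1 (fun y q => pd q ρ y) x d c * M.g x a b := by
  set θ : (Fin n → ℝ) → Fin n → ℝ := fun y q => κ * k y q - pd q ρ y
  have hU : M.covD2 (M.covD1 k) = fun y p q r =>
      θ y q * M.g y r p - θ y r * M.g y p q - pd p ρ y * M.g y q r := by
    funext y p q r
    exact hck.covD2_covD1_eq hκ hk hρ y p q r
  have hθ : ∀ p,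
      M.covD1 θ x d p = κ * M.covD1 k x d p - M.covD1 (fun y q => pd q ρ y) x d p :=
    fun p => by rw [M.covD1_sub (fun _ => by fun_prop) (fun _ => by fun_prop), M.covD1_const_mul]
  have hA : M.covD3 (fun y p q r => θ y q * M.g y r p) x d c a b = M.covD1 θ x d a * M.g x b c :=
    (M.covD3_rotate _ d c a b).trans (M.covD3_mul_g (fun _ => by fun_prop) d a b c)
  have hB : M.covD3 (fun y p q r => θ y r * M.g y p q) x d c a b = M.covD1 θ x d b * M.g x c a :=
    ((M.covD3_rotate _ d c a b).trans (M.covD3_rotate _ d a b c)).trans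
      (M.covD3_mul_g (fun _ => by fun_prop) d b c a)
  have hC := M.covD3_mul_g (x := x) (θ := fun y q => pd q ρ y) (fun _ => by fun_prop) d c a b
  rw [hU, M.covD3_sub (fun _ _ _ => by fun_prop) (fun _ _ _ => by fun_prop),
    M.covD3_sub (fun _ _ _ => by fun_prop) (fun _ _ _ => by fun_prop), hA, hB, hC, hθ, hθ]

theorem hessian_eq (hck : M.IsConformalKilling k ρ) (hn : 3 ≤ n) (hκ : M.HasConstCurvature κ)
    (hk : ∀ b, ContDiff ℝ ∞ (k · b)) (x : Fin n → ℝ) (a b : Fin n) :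
    M.covD1 (fun y c => pd c ρ y) x a b = -κ * ρ x * M.g x a b := by
  have hρ := hck.contDiff (by omega) hk
  have hT := M.eq_zero_of_kulkarniNomizu_g_eq_zero hn x
    (T := fun p q => M.covD1 (fun y r => pd r ρ y) x p q + κ * ρ x * M.g x p q)
    ?_ a b
  · linear_combination hT
  intro a b c d
  have hricci := M.covD3_covD2_sub_swap (T := M.covD1 k) (M.contDiff_covD1 hk) x d c a b
  rw [hck.covD3_covD2_covD1_eq hκ hk hρ, hck.covD3_covD2_covD1_eq hκ hk hρ, hκ.sum_riem_mul,
    hκ.sum_riem_mul] at hricci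
  have had := hck.covD1_add_covD1_swap x a d
  have hac := hck.covD1_add_covD1_swap x a c
  -- orient every `g` the same way so that `linear_combination` sees the cancellations
  simp only [M.symm x b c, M.symm x a d, M.symm x a c, M.symm x d b] at hricci had hac ⊢
  linear_combination -hricci + κ * (M.g x c b * had - M.g x b d * hac)
    - M.g x a b * M.covD1_grad_symm hρ x d c

theorem isKilling_sub_inv_mul_grad (hck : M.IsConformalKilling k ρ)
    (hk : ∀ b, ContDiff ℝ ∞ (k · b)) (hρ : ContDiff ℝ ∞ ρ) (hκ : κ ≠ 0)
    (hH : ∀ x a b, M.covD1 (fun y c => pd c ρ y) x a b = -κ * ρ x * M.g x a b) :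
    M.IsKilling (fun y b => k y b - κ⁻¹ * pd b ρ y) := by
  intro x a b
  have hsub : ∀ p q, M.covD1 (fun y c => k y c - κ⁻¹ * pd c ρ y) x p q
      = M.covD1 k x p q - κ⁻¹ * M.covD1 (fun y c => pd c ρ y) x p q := fun p q => by
    rw [M.covD1_sub (h := fun y c => κ⁻¹ * pd c ρ y) (fun _ => by fun_prop)
      (fun _ => by fun_prop), M.covD1_const_mul]
  rw [hsub, hsub, hH, hH, M.symm x b a]
  field_simp
  linear_combination hck.covD1_add_covD1_swap x a b

end IsConformalKilling

end PseudoMetricChart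

theorem einstein_ckv_killing_general {n : ℕ} (hn : 3 ≤ n) (M : PseudoMetricChart n)
    (J : ℝ) (hJ0 : J ≠ 0)
    (hEin : ∀ x a b, M.Schouten x a b = (J / (n : ℝ)) * M.g x a b)
    (hCF : ∀ x a b c d,
      (∑ e, M.g x c e * M.Riem x a b e d)
        = M.g x c a * M.Schouten x b d - M.g x c b * M.Schouten x a d
          + M.g x d b * M.Schouten x a c - M.g x d a * M.Schouten x b c)
    (k : (Fin n → ℝ) → Fin n → ℝ)
    (hk_smooth : ∀ a, ContDiff ℝ (⊤ : ℕ∞) fun x => k x a)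
    (kvec : (Fin n → ℝ) → Fin n → ℝ)
    (ρ : (Fin n → ℝ) → ℝ)
    (hρ : ∀ x, ρ x = -(1 / (n : ℝ)) * M.divVec kvec x)
    (hCKV : ∀ x a b,
      (1 / 2) * (M.covD1 k x a b + M.covD1 k x b a) = -(ρ x) * M.g x a b) :
    (∀ x a b, M.covD1 (fun y c => pd c ρ y) x a b
        = -(2 * J / (n : ℝ)) * ρ x * M.g x a b)
      ∧ (∀ x a b,
          M.covD1 (fun y b' => k y b'
              + (1 / (2 * J)) * pd b' (fun z => M.divVec kvec z) y) x a b
            + M.covD1 (fun y b' => k y b'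
              + (1 / (2 * J)) * pd b' (fun z => M.divVec kvec z) y) x b a = 0) := by
  have hn0 : (n : ℝ) ≠ 0 := by exact_mod_cast (by omega : n ≠ 0)
  have hck : M.IsConformalKilling k ρ := hCKV
  have hκ : M.HasConstCurvature (2 * J / n) := by
    rw [mul_div_assoc]
    exact M.hasConstCurvature_of_schouten_eq hEin hCF
  have hH := hck.hessian_eq hn hκ hk_smooth
  refine ⟨hH, ?_⟩
  have hdiv : (fun z => M.divVec kvec z) = fun z => -n * ρ z := by
    funext z
    rw [hρ z]
    field_simp
  have hfield : (fun y b => k y b + (1 / (2 * J)) * pd b (fun z => M.divVec kvec z) y)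
      = fun y b => k y b - (2 * J / n)⁻¹ * pd b ρ y := by
    funext y b
    rw [hdiv, pd_const_mul]
    field_simp
    ring
  rw [hfield]
  exact hck.isKilling_sub_inv_mul_grad hk_smooth (hck.contDiff (by omega) hk_smooth)
    (by positivity) hH

/-- on a conformally flat Einstein manifold with `P = (J/n) g`,
`J ≠ 0` constant, for a conformal Killing 1-form `k` (with
`∇_{(a}k_{b)} = -ρ g_{ab}`, `ρ = -(1/n)∇_a k^a`) the Hessian of `ρ` satisfies
`∇_a ∇_b ρ = -(2J/n) ρ g_{ab}`, and `k̄_b = k_b + (1/(2J)) ∇_b ∇_a k^a` is a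
Killing vector field for `g`. -/
theorem einstein_ckv_killing {n : ℕ} (hn : 3 ≤ n) (M : PseudoMetricChart n)
    (J : ℝ) (hJ0 : J ≠ 0)
    (hJconst : ∀ x, M.Jsc x = J)
    (hEin : ∀ x a b, M.Schouten x a b = (J / (n : ℝ)) * M.g x a b)
    (hCF : ∀ x a b c d,
      (∑ e, M.g x c e * M.Riem x a b e d)
        = M.g x c a * M.Schouten x b d - M.g x c b * M.Schouten x a d
          + M.g x d b * M.Schouten x a c - M.g x d a * M.Schouten x b c)
    (k : (Fin n → ℝ) → Fin n → ℝ)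
    (hk_smooth : ∀ a, ContDiff ℝ (⊤ : ℕ∞) fun x => k x a)
    (kvec : (Fin n → ℝ) → Fin n → ℝ)
    (hkvec : ∀ x c, kvec x c = ∑ b, M.ginv x c b * k x b)
    (ρ : (Fin n → ℝ) → ℝ)
    (hρ : ∀ x, ρ x = -(1 / (n : ℝ)) * M.divVec kvec x)
    (hCKV : ∀ x a b,
      (1 / 2) * (M.covD1 k x a b + M.covD1 k x b a) = -(ρ x) * M.g x a b) :
    (∀ x a b, M.covD1 (fun y c => pd c ρ y) x a b
        = -(2 * J / (n : ℝ)) * ρ x * M.g x a b)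
      ∧ (∀ x a b,
          M.covD1 (fun y b' => k y b'
              + (1 / (2 * J)) * pd b' (fun z => M.divVec kvec z) y) x a b
            + M.covD1 (fun y b' => k y b'
              + (1 / (2 * J)) * pd b' (fun z => M.divVec kvec z) y) x b a = 0) :=
  einstein_ckv_killing_general hn M J hJ0 hEin hCF k hk_smooth kvec ρ hρ hCKV
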